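/- Let o, d, n be positive integers, β > 0, and Y ∈ ℝ^{o×n} with Y ≠ 0. Then the zero feature matrix is not a global minimizer of the reduced loss L* : ℝ^{d×n} → ℝ: there exists Φ ∈ ℝ^{d×n} with L*(Φ) < L*(0) = ‖Y‖_F². -/

import Mathlib

open Matrix BigOperators

attribute [local instance] Matrix.frobeniusNormedAddCommGroup Matrix.frobeniusNormedSpace

/-- Squared Frobenius norm of a real matrix. -/
noncomputable def sqFrob {m n : ℕ} (A : Matrix (Fin m) (Fin n) ℝ) : ℝ :=
  ∑ i, ∑ j, (A i j) ^ 2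

/-- The closed-form ridge solution `W*(Φ) = YΦᵀ(ΦΦᵀ + βI)⁻¹`. -/
noncomputable def Wstar {o d n : ℕ} (β : ℝ) (Y : Matrix (Fin o) (Fin n) ℝ)
    (Φ : Matrix (Fin d) (Fin n) ℝ) : Matrix (Fin o) (Fin d) ℝ :=
  Y * Φᵀ * (Φ * Φᵀ + β • (1 : Matrix (Fin d) (Fin d) ℝ))⁻¹

/-- The reduced loss `L*(Φ) = ‖Y − W*(Φ)Φ‖_F² + β‖W*(Φ)‖_F²`. -/
noncomputable def Lstar {o d n : ℕ} (β : ℝ) (Y : Matrix (Fin o) (Fin n) ℝ)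
    (Φ : Matrix (Fin d) (Fin n) ℝ) : ℝ :=
  sqFrob (Y - Wstar β Y Φ * Φ) + β * sqFrob (Wstar β Y Φ)

/-! If `Φ Φᵀ Φ = Φ`, then `Φᵀ (Φ Φᵀ + β I) = (1 + β) Φᵀ`, so the ridge solution is
`W*(Φ) = Y Φᵀ / (1 + β)`, and since `Φᵀ Φ` is an orthogonal projection the reduced loss is
`L*(Φ) = ‖Y‖² - ‖Y Φᵀ‖² / (1 + β)`. A matrix unit `E_kj` satisfies `Φ Φᵀ Φ = Φ`, and `Y E_kjᵀ`
is the `j`-th column of `Y` moved to column `k`, which is nonzero for a suitable `j`. -/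

section SqFrob

variable {m n : ℕ}

lemma sqFrob_eq_trace (A : Matrix (Fin m) (Fin n) ℝ) : sqFrob A = trace (A * Aᵀ) := by
  simp [sqFrob, trace, mul_apply, sq]

lemma sqFrob_pos {A : Matrix (Fin m) (Fin n) ℝ} (hA : A ≠ 0) : 0 < sqFrob A := by
  obtain ⟨i, j, hij⟩ : ∃ i j, A i j ≠ 0 := by
    by_contra! h
    exact hA (ext h)
  exact Finset.sum_pos' (fun i _ => Finset.sum_nonneg fun j _ => sq_nonneg _)
    ⟨i, Finset.mem_univ _, Finset.sum_pos' (fun j _ => sq_nonneg _)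
      ⟨j, Finset.mem_univ _, by positivity⟩⟩

end SqFrob

namespace Matrix

variable {ι κ : Type*} [Fintype ι] [Fintype κ] [DecidableEq ι]

lemma isUnit_mul_transpose_add_smul_one (Φ : Matrix ι κ ℝ) {β : ℝ} (hβ : 0 < β) :
    IsUnit (Φ * Φᵀ + β • (1 : Matrix ι ι ℝ)) := by
  have hΦ : (Φ * Φᵀ).PosSemidef := by
    simpa using posSemidef_self_mul_conjTranspose Φ
  exact (PosDef.posSemidef_add hΦ (PosDef.one.smul hβ)).isUnit

lemma single_mul_transpose_mul_self [DecidableEq κ] {R : Type*} [Semiring R] (i : ι) (j : κ) :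
    single i j (1 : R) * (single i j (1 : R))ᵀ * single i j (1 : R) = single i j 1 := by
  simp [transpose_single]

end Matrix

section Ridge

variable {o d n : ℕ} (β : ℝ) (Y : Matrix (Fin o) (Fin n) ℝ)

lemma Lstar_zero : Lstar β Y (0 : Matrix (Fin d) (Fin n) ℝ) = sqFrob Y := by
  simp [Lstar, Wstar, sqFrob]

variable {β} {Φ : Matrix (Fin d) (Fin n) ℝ}

lemma Wstar_of_mul_transpose_mul_self (hβ : 0 < β) (hΦ : Φ * Φᵀ * Φ = Φ) :
    Wstar β Y Φ = (1 + β)⁻¹ • (Y * Φᵀ) := by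
  have key : Φᵀ * (Φ * Φᵀ + β • 1) = (1 + β) • Φᵀ := by
    have : Φᵀ * Φ * Φᵀ = Φᵀ := by simpa [Matrix.mul_assoc] using congrArg transpose hΦ
    rw [Matrix.mul_add, ← Matrix.mul_assoc, this, add_smul, one_smul, Matrix.mul_smul,
      Matrix.mul_one]
  have hne : (1 + β) ≠ 0 := by positivity
  rw [Wstar, Matrix.mul_assoc, ← inv_smul_smul₀ hne (Φᵀ * _), ← Matrix.smul_mul, ← key,
    Matrix.mul_assoc, mul_nonsing_inv _
    ((isUnit_iff_isUnit_det _).mp (isUnit_mul_transpose_add_smul_one Φ hβ)), Matrix.mul_one,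
    Matrix.mul_smul]

lemma Lstar_of_mul_transpose_mul_self (hβ : 0 < β) (hΦ : Φ * Φᵀ * Φ = Φ) :
    Lstar β Y Φ = sqFrob Y - (1 + β)⁻¹ * sqFrob (Y * Φᵀ) := by
  set c := (1 + β)⁻¹
  set P := Φᵀ * Φ
  have hP : P * P = P := by
    rw [Matrix.mul_assoc] at hΦ
    simp only [P, Matrix.mul_assoc, hΦ]
  have hPt : Pᵀ = P := by simp [P]
  have hres : (Y - c • (Y * Φᵀ) * Φ) * (Y - c • (Y * Φᵀ) * Φ)ᵀ
      = Y * Yᵀ - (2 * c - c ^ 2) • (Y * P * Yᵀ) := by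
    have : Y - c • (Y * Φᵀ) * Φ = Y * (1 - c • P) := by
      simp [P, Matrix.mul_sub, Matrix.mul_smul, Matrix.mul_assoc]
    rw [this, transpose_mul, Matrix.mul_assoc, ← Matrix.mul_assoc (1 - c • P)]
    simp only [transpose_sub, transpose_one, transpose_smul, hPt, Matrix.sub_mul, Matrix.mul_sub,
      Matrix.one_mul, Matrix.mul_one, Matrix.smul_mul, Matrix.mul_smul, hP, smul_sub, smul_smul]
    rw [Matrix.mul_assoc Y P]
    module
  rw [Lstar, Wstar_of_mul_transpose_mul_self Y hβ hΦ, sqFrob_eq_trace, hres, sqFrob_eq_trace,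
    sqFrob_eq_trace, sqFrob_eq_trace]
  have hc : c * (1 + β) = 1 := inv_mul_cancel₀ (by positivity)
  simp only [trace_sub, trace_smul, transpose_smul, transpose_mul, transpose_transpose,
    Matrix.smul_mul, Matrix.mul_smul, smul_smul, Matrix.mul_assoc, P, smul_eq_mul]
  linear_combination (c * trace (Y * (Φᵀ * (Φ * Yᵀ)))) * hc

end Ridge

theorem stmt_8_general (o d n : ℕ) (hd : 0 < d)
    (β : ℝ) (hβ : 0 < β)
    (Y : Matrix (Fin o) (Fin n) ℝ) (hY : Y ≠ 0) :
    Lstar β Y (0 : Matrix (Fin d) (Fin n) ℝ) = sqFrob Y ∧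
    ∃ Φ : Matrix (Fin d) (Fin n) ℝ,
      Lstar β Y Φ < Lstar β Y (0 : Matrix (Fin d) (Fin n) ℝ) := by
  refine ⟨Lstar_zero β Y, ?_⟩
  obtain ⟨i, j, hij⟩ : ∃ i j, Y i j ≠ 0 := by
    by_contra! h
    exact hY (ext h)
  let k : Fin d := ⟨0, hd⟩
  have hYΦ : Y * (single k j (1 : ℝ))ᵀ ≠ 0 := fun h ↦
    hij (by simpa [transpose_single] using congrFun (congrFun h i) k)
  refine ⟨single k j 1, ?_⟩
  rw [Lstar_zero, Lstar_of_mul_transpose_mul_self Y hβ (single_mul_transpose_mul_self k j)]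
  exact sub_lt_self _ (mul_pos (by positivity) (sqFrob_pos hYΦ))

theorem stmt_8 (o d n : ℕ) (ho : 0 < o) (hd : 0 < d) (hn : 0 < n)
    (β : ℝ) (hβ : 0 < β)
    (Y : Matrix (Fin o) (Fin n) ℝ) (hY : Y ≠ 0) :
    Lstar β Y (0 : Matrix (Fin d) (Fin n) ℝ) = sqFrob Y ∧
    ∃ Φ : Matrix (Fin d) (Fin n) ℝ,
      Lstar β Y Φ < Lstar β Y (0 : Matrix (Fin d) (Fin n) ℝ) :=
  stmt_8_general o d n hd β hβ Y hY
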